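/- For X ∈ g let ad X : g → g denote the linear map Y ↦ [X,Y], and let B(X,Y) = trace((ad X) ∘ (ad Y) : g → g) be the Killing form of g. Then B(M₅,M₅) = −4, while B(M_i,M_j) = 0 for every other pair of basis elements (i,j) ≠ (5,5) with i, j ∈ {1,...,7}. In particular the Killing form of g is degenerate — the nonzero element M₄ satisfies B(M₄,Y) = 0 for all Y ∈ g — and therefore g is not a semisimple Lie algebra. -/

import Mathlib

noncomputable section

/-- The elementary 5×5 real matrix with a 1 in entry (i,j). -/
def E (i j : Fin 5) : Matrix (Fin 5) (Fin 5) ℝ := Matrix.single i j 1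

/-- The matrices M₁,...,M₇ realizing the symmetry Lie algebra of the (2+1)-dimensional
Kuramoto–Sivashinsky equation on the 5-dimensional space with basis 1, x, y, t, h:
M₁ = E₀₁, M₂ = E₀₂, M₃ = E₀₃, M₄ = E₀₄, M₅ = E₂₁ − E₁₂,
M₆ = E₃₁ + (1/(2λ))E₁₄, M₇ = E₃₂ + (1/(2λ))E₂₄ (indexed here by `Fin 7`). -/
def M (lam : ℝ) : Fin 7 → Matrix (Fin 5) (Fin 5) ℝ :=
  ![E 0 1, E 0 2, E 0 3, E 0 4, E 2 1 - E 1 2,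
    E 3 1 + (1 / (2 * lam)) • E 1 4, E 3 2 + (1 / (2 * lam)) • E 2 4]

/-- g: the real linear span of {M₁,...,M₇}. -/
def ksSpan (lam : ℝ) : Submodule ℝ (Matrix (Fin 5) (Fin 5) ℝ) :=
  Submodule.span ℝ (Set.range (M lam))

attribute [local instance 100] LieRing.ofAssociativeRing

/-- g as a Lie subalgebra of the 5×5 real matrices. -/
def ksLie (lam : ℝ) : LieSubalgebra ℝ (Matrix (Fin 5) (Fin 5) ℝ) :=
  LieSubalgebra.lieSpan ℝ (Matrix (Fin 5) (Fin 5) ℝ) (Set.range (M lam))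

/-!
The pivot entries (0,1), (0,2), (0,3), (0,4), (2,1), (3,1), (3,2) of M₁,…,M₇ are coordinates
on g, so B(X,Y) is the sum over k of the k-th pivot entry of [X,[Y,M_k]].
Bracketing with D = diag(2,0,0,1,-1) scales M₁,…,M₇ by the weights 2,2,1,3,0,1,1, and
ad D is a derivation, so [M_i,[M_j,M_k]] has weight w_i + w_j + w_k, while the k-th pivot entry
has weight w_k. That entry therefore vanishes unless w_i + w_j = 0, i.e. unless i = j = 5.
Finally M₄ = E₀₄ is central, since every element of g has zero row 4 and zero column 0, and a
nonzero centre rules out semisimplicity.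
-/

open Module Submodule Set

theorem LinearMap.trace_eq_sum_repr {R M ι : Type*} [CommRing R] [AddCommGroup M] [Module R M]
    [Fintype ι] [DecidableEq ι] (b : Basis ι R M) (f : M →ₗ[R] M) :
    trace R M f = ∑ i, b.repr (f (b i)) i := by
  simp [trace_eq_matrix_trace R b, Matrix.trace, LinearMap.toMatrix_apply]

theorem killingForm_eq_sum_repr {R L ι : Type*} [CommRing R] [LieRing L] [LieAlgebra R L]
    [Fintype ι] [DecidableEq ι] (b : Basis ι R L) (x y : L) :
    killingForm R L x y = ∑ i, b.repr ⁅x, ⁅y, b i⁆⁆ i := by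
  simp [killingForm_apply_apply, LinearMap.trace_eq_sum_repr b]

theorem lie_lie_eq_smul_of_lie_eq_smul {R L : Type*} [CommRing R] [LieRing L] [LieAlgebra R L]
    {D x y : L} {a b : R} (hx : ⁅D, x⁆ = a • x) (hy : ⁅D, y⁆ = b • y) :
    ⁅D, ⁅x, y⁆⁆ = (a + b) • ⁅x, y⁆ := by
  rw [leibniz_lie, hx, hy, smul_lie, lie_smul, add_smul, add_comm]

namespace LieSubalgebra

variable {R A ι : Type*} [CommRing R] [LieRing A] [LieAlgebra R A]

theorem coe_lieSpan_eq_span_of_forall_lie_mem_span {s : Set A}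
    (hs : ∀ x ∈ s, ∀ y ∈ s, ⁅x, y⁆ ∈ span R s) :
    (lieSpan R A s : Submodule R A) = span R s := by
  suffices ∀ {x y}, x ∈ span R s → y ∈ span R s → ⁅x, y⁆ ∈ span R s by
    refine le_antisymm ?_ submodule_span_le_lieSpan
    change _ ≤ ({ span R s with lie_mem' := this } : LieSubalgebra R A)
    rw [lieSpan_le]
    exact subset_span
  intro x y hx hy
  induction hx, hy using span_induction₂ with
  | mem_mem x y hx hy => exact hs x hx y hy
  | zero_left y hy => simp
  | zero_right x hx => simp
  | add_left x y z _ _ _ hx hy => simp [add_mem hx hy]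
  | add_right x y z _ _ _ hx hy => simp [add_mem hx hy]
  | smul_left r x y _ _ h => simp [smul_mem _ r h]
  | smul_right r x y _ _ h => simp [smul_mem _ r h]

variable [DecidableEq ι] {L : LieSubalgebra R A} {v : ι → A} {f : ι → Dual R A}

def basisOfBiorthogonal (hL : (L : Submodule R A) = span R (range v))
    (hf : ∀ i j, f i (v j) = if i = j then 1 else 0) : Basis ι R L :=
  (Basis.span (LinearIndependent.of_pairwise_dual_eq_zero_one v f
    (fun i j hij => by simp [hf, hij]) (fun i => by simp [hf]))).map (LinearEquiv.ofEq _ _ hL.symm)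

variable (hL : (L : Submodule R A) = span R (range v))
  (hf : ∀ i j, f i (v j) = if i = j then 1 else 0)

@[simp]
theorem coe_basisOfBiorthogonal (i : ι) : (basisOfBiorthogonal hL hf i : A) = v i := by
  simp only [basisOfBiorthogonal, Basis.map_apply, Basis.span_apply]
  rfl

theorem basisOfBiorthogonal_repr (x : L) (i : ι) :
    (basisOfBiorthogonal hL hf).repr x i = f i x := by
  let b := basisOfBiorthogonal hL hf
  suffices (Finsupp.lapply i).comp b.repr.toLinearMap = (f i).comp (L : Submodule R A).subtype from
    LinearMap.congr_fun this x
  refine b.ext fun j => ?_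
  change _ = f i (b j : A)
  simp [b, hf, Finsupp.single_apply, eq_comm]

end LieSubalgebra

namespace Matrix

variable {n R : Type*} [Fintype n] [DecidableEq n] [CommRing R]

theorem lie_diagonal_apply (d : n → R) (A : Matrix n n R) (p q : n) :
    ⁅diagonal d, A⁆ p q = (d p - d q) * A p q := by
  simp only [Ring.lie_def, sub_apply, diagonal_mul, mul_diagonal]
  ring

theorem apply_eq_zero_of_lie_diagonal_eq_smul [NoZeroDivisors R] {d : n → R} {A : Matrix n n R}
    {s : R} (hA : ⁅diagonal d, A⁆ = s • A) {p q : n} (hs : s ≠ d p - d q) : A p q = 0 := by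
  have hpq := congr_fun (congr_fun hA p) q
  rw [lie_diagonal_apply, smul_apply, smul_eq_mul, ← sub_eq_zero, ← sub_mul] at hpq
  exact (mul_eq_zero.mp hpq).resolve_left (sub_ne_zero.mpr hs.symm)

end Matrix

namespace KuramotoSivashinsky

open Matrix

local notation "Mat₅" => Matrix (Fin 5) (Fin 5) ℝ

theorem E_apply (i j a b : Fin 5) : E i j a b = if i = a ∧ j = b then 1 else 0 := rfl

theorem E_mul_E (i j k l : Fin 5) : E i j * E k l = if j = k then E i l else 0 := by
  by_cases h : j = k
  · subst h; simp [E]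
  · simp [E, h]

theorem lie_diagonal_E (d : Fin 5 → ℝ) (i j : Fin 5) :
    ⁅diagonal d, E i j⁆ = (d i - d j) • E i j := by
  ext p q
  rw [lie_diagonal_apply, Matrix.smul_apply, E_apply, smul_eq_mul]
  split_ifs with h
  · rw [h.1, h.2]
  · simp

def pivot : Fin 7 → Fin 5 × Fin 5 := ![(0, 1), (0, 2), (0, 3), (0, 4), (2, 1), (3, 1), (3, 2)]

def pivotCoord (k : Fin 7) : Dual ℝ Mat₅ := entryLinearMap ℝ ℝ (pivot k).1 (pivot k).2

def grading : Fin 5 → ℝ := ![2, 0, 0, 1, -1]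

def weight (k : Fin 7) : ℝ := grading (pivot k).1 - grading (pivot k).2

theorem weight_nonneg (k : Fin 7) : 0 ≤ weight k := by
  fin_cases k <;> simp [weight, grading, pivot, two_add_one_eq_three]

theorem weight_pos (k : Fin 7) (hk : k ≠ 4) : 0 < weight k := by
  fin_cases k <;> simp [weight, grading, pivot, two_add_one_eq_three] at hk ⊢

variable (lam : ℝ)

theorem pivotCoord_M (k i : Fin 7) : pivotCoord k (M lam i) = if k = i then 1 else 0 := by
  fin_cases k <;> fin_cases i <;> simp [pivotCoord, pivot, M, E_apply]

theorem lie_M_eq_sum_pivotCoord_smul (i j : Fin 7) :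
    ⁅M lam i, M lam j⁆ = ∑ k, pivotCoord k ⁅M lam i, M lam j⁆ • M lam k := by
  fin_cases i <;> fin_cases j <;>
    simp [Fin.sum_univ_seven, pivotCoord, pivot, M, Ring.lie_def, E_mul_E, E_apply, mul_sub,
      sub_mul, add_mul, mul_add, smul_sub, smul_add] <;> module

theorem coe_ksLie : (ksLie lam : Submodule ℝ Mat₅) = span ℝ (range (M lam)) := by
  refine LieSubalgebra.coe_lieSpan_eq_span_of_forall_lie_mem_span ?_
  rintro _ ⟨i, rfl⟩ _ ⟨j, rfl⟩
  rw [lie_M_eq_sum_pivotCoord_smul]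
  exact sum_mem fun k _ => smul_mem _ _ (subset_span ⟨k, rfl⟩)

theorem killingForm_ksLie (X Y : ksLie lam) :
    killingForm ℝ (ksLie lam) X Y =
      ∑ k, pivotCoord k ⁅(X : Mat₅), ⁅(Y : Mat₅), M lam k⁆⁆ := by
  simp [killingForm_eq_sum_repr
      (LieSubalgebra.basisOfBiorthogonal (coe_ksLie lam) (pivotCoord_M lam)),
    LieSubalgebra.basisOfBiorthogonal_repr]

theorem lie_diagonal_grading_M (k : Fin 7) :
    ⁅diagonal grading, M lam k⁆ = weight k • M lam k := by
  fin_cases k <;>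
    simp [M, lie_diagonal_E, weight, grading, pivot, smul_sub, smul_add, smul_smul]

theorem pivotCoord_lie_lie_M_eq_zero {i j : Fin 7} (hij : ¬(i = 4 ∧ j = 4)) (k : Fin 7) :
    pivotCoord k ⁅M lam i, ⁅M lam j, M lam k⁆⁆ = 0 := by
  have hpos : 0 < weight i + weight j := by
    by_cases hi : i = 4
    · linarith [weight_pos j fun hj => hij ⟨hi, hj⟩, weight_nonneg i]
    · linarith [weight_pos i hi, weight_nonneg j]
  have hD := lie_lie_eq_smul_of_lie_eq_smul (lie_diagonal_grading_M lam i)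
    (lie_lie_eq_smul_of_lie_eq_smul (lie_diagonal_grading_M lam j) (lie_diagonal_grading_M lam k))
  refine apply_eq_zero_of_lie_diagonal_eq_smul hD ?_
  change _ ≠ weight k
  linarith

theorem sum_pivotCoord_lie_lie_M_four :
    ∑ k, pivotCoord k ⁅M lam 4, ⁅M lam 4, M lam k⁆⁆ = -4 := by
  simp [Fin.sum_univ_seven, pivotCoord, pivot, M, Ring.lie_def, E_mul_E, E_apply, mul_sub,
    sub_mul, add_mul, mul_add]
  norm_num

theorem lie_M_three (j : Fin 7) : ⁅M lam 3, M lam j⁆ = 0 := by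
  fin_cases j <;> simp [M, Ring.lie_def, E_mul_E, mul_sub, sub_mul, add_mul, mul_add]

theorem lie_M_three_eq_zero_of_mem {A : Mat₅} (hA : A ∈ span ℝ (range (M lam))) :
    ⁅M lam 3, A⁆ = 0 :=
  (span_le (p := LinearMap.ker (LieAlgebra.ad ℝ _ (M lam 3)))).mpr
    (by rintro _ ⟨j, rfl⟩; exact lie_M_three lam j) hA

end KuramotoSivashinsky

open KuramotoSivashinsky

theorem ksLie_killing_form_degenerate_general (lam : ℝ)
    (N : Fin 7 → ksLie lam)
    (hN : ∀ i : Fin 7, (N i : Matrix (Fin 5) (Fin 5) ℝ) = M lam i) :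
    killingForm ℝ (ksLie lam) (N 4) (N 4) = -4 ∧
    (∀ i j : Fin 7, ¬(i = 4 ∧ j = 4) → killingForm ℝ (ksLie lam) (N i) (N j) = 0) ∧
    N 3 ≠ 0 ∧
    (∀ Y : ksLie lam, killingForm ℝ (ksLie lam) (N 3) Y = 0) ∧
    ¬ LieAlgebra.IsSemisimple ℝ (ksLie lam) := by
  have hB (i j : Fin 7) : killingForm ℝ (ksLie lam) (N i) (N j) =
      ∑ k, pivotCoord k ⁅M lam i, ⁅M lam j, M lam k⁆⁆ := by
    rw [killingForm_ksLie, hN, hN]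
  have hN₃_ne : N 3 ≠ 0 := fun h => by
    simpa [E, M, h] using congr_arg (fun A : Matrix (Fin 5) (Fin 5) ℝ => A 0 4) (hN 3)
  have hN₃_central (Y : ksLie lam) : ⁅N 3, Y⁆ = 0 := Subtype.ext <| by
    rw [LieSubalgebra.coe_bracket, hN, lie_M_three_eq_zero_of_mem lam (coe_ksLie lam ▸ Y.2),
      ZeroMemClass.coe_zero]
  have hcenter : N 3 ∈ LieAlgebra.center ℝ (ksLie lam) :=
    LieAlgebra.self_module_ker_eq_center ℝ (ksLie lam) ▸
      (LieModule.mem_ker ℝ _ _ _).mpr hN₃_central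
  refine ⟨?_, fun i j hij => ?_, hN₃_ne, fun Y => ?_, fun _ => ?_⟩
  · rw [hB, sum_pivotCoord_lie_lie_M_four]
  · rw [hB]
    exact Finset.sum_eq_zero fun k _ => pivotCoord_lie_lie_M_eq_zero lam hij k
  · have had : LieAlgebra.ad ℝ _ (N 3) = 0 := LinearMap.ext hN₃_central
    rw [killingForm_apply_apply, had, LinearMap.zero_comp, map_zero]
  · exact hN₃_ne (by simpa [LieAlgebra.center_eq_bot] using hcenter)

/-- The Killing form B of g satisfies B(M₅,M₅) = −4 and B(M_i,M_j) = 0 for all other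
pairs of basis elements; in particular B is degenerate (the nonzero element M₄ is in its
radical) and g is not semisimple. -/
theorem ksLie_killing_form_degenerate (lam : ℝ) (hlam : lam ≠ 0)
    (N : Fin 7 → ksLie lam)
    (hN : ∀ i : Fin 7, (N i : Matrix (Fin 5) (Fin 5) ℝ) = M lam i) :
    killingForm ℝ (ksLie lam) (N 4) (N 4) = -4 ∧
    (∀ i j : Fin 7, ¬(i = 4 ∧ j = 4) → killingForm ℝ (ksLie lam) (N i) (N j) = 0) ∧
    N 3 ≠ 0 ∧
    (∀ Y : ksLie lam, killingForm ℝ (ksLie lam) (N 3) Y = 0) ∧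
    ¬ LieAlgebra.IsSemisimple ℝ (ksLie lam) :=
  ksLie_killing_form_degenerate_general lam N hN
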